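/- Let G = (V, E) be a multigraph, let k ≥ 2 be an integer, let U ⊆ E be a submultiset such that (V, U) is a k-trail, and let C ⊆ E ∖ U be the edge multiset of a cycle in the multigraph (V, E ∖ U). Then (V, U ∪ C) is also a k-trail. -/

import Mathlib

/-!
Take a connected preimage `H` of `(V, U)` of maximum degree at most `k` and an edge `wx` of `H`
whose endpoint `w` lies over the last vertex `v_r` of the cycle; it exists because `H` is connected
and has at least two vertices. Subdivide `wx` by fresh copies `c_0, …, c_r` of the cycle vertices,
giving the path `w, c_0, …, c_r, x`. Its edges map to the cycle edges `v_r v_0, v_0 v_1, …` and to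
the image of `wx`, so the new graph is a connected preimage of `U + C`; the degrees of the old
vertices are unchanged and the new ones have degree `2 ≤ k`.
-/

/-- A multigraph on vertex type `V`: a finite multiset of unordered pairs of
vertices (loops and parallel edges allowed). -/
structure Multigraph (V : Type) where
  edges : Multiset (Sym2 V)

namespace Multigraph

open Classical in
/-- The degree of a vertex: number of edge-endpoints at `v`, a loop counting twice. -/
noncomputable def deg {V : Type} (G : Multigraph V) (v : V) : ℕ :=
  (G.edges.map fun e => if e = Sym2.diag v then 2 else if v ∈ e then 1 else 0).sum

/-- Adjacency in a multigraph. -/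
def Adj {V : Type} (G : Multigraph V) (u v : V) : Prop := s(u, v) ∈ G.edges

/-- A multigraph is connected if it has a vertex and any two vertices are joined by a walk. -/
def Connected {V : Type} (G : Multigraph V) : Prop :=
  Nonempty V ∧ ∀ u v : V, Relation.ReflTransGen G.Adj u v

open Classical in
/-- `G` is the homomorphic image of `H` by the onto function `φ`: for all `u v`,
the number of edges of `G` between `u` and `v` equals the number of edges of `H`
whose endpoints are mapped by `φ` to `{u, v}`. -/
def IsHomImage {V W : Type} (G : Multigraph V) (H : Multigraph W) (φ : W → V) : Prop :=
  Function.Surjective φ ∧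
    ∀ u v : V, G.edges.count s(u, v) = (H.edges.map (Sym2.map φ)).count s(u, v)

/-- A tree: a connected multigraph with `|F| = |W| - 1`. -/
def IsTree {W : Type} (H : Multigraph W) : Prop :=
  Connected H ∧ Multiset.card H.edges + 1 = Nat.card W

/-- A multigraph is a `k`-trail if it is the homomorphic image of a (finite)
connected multigraph of maximum degree at most `k`. -/
def IsKTrail {V : Type} (G : Multigraph V) (k : ℕ) : Prop :=
  ∃ (W : Type) (_ : Finite W) (H : Multigraph W) (φ : W → V),
    Connected H ∧ (∀ w, H.deg w ≤ k) ∧ IsHomImage G H φ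

/-- `G` contains a `k`-trail if some submultiset `U` of its edges gives a `k`-trail `(V, U)`. -/
def ContainsKTrail {V : Type} (G : Multigraph V) (k : ℕ) : Prop :=
  ∃ U : Multiset (Sym2 V), U ≤ G.edges ∧ IsKTrail (Multigraph.mk U) k

/-- `lam` is a feasible multiplicity vector for `G`. -/
def FeasibleMult {V : Type} (G : Multigraph V) (lam : V → ℕ) : Prop :=
  ∃ (W : Type) (_ : Finite W) (H : Multigraph W) (φ : W → V),
    Connected H ∧ IsHomImage G H φ ∧ ∀ v : V, Nat.card (φ ⁻¹' {v}) = lam v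

end Multigraph

open Multigraph


/-- `C` is the edge multiset of a cycle in `G`: there are distinct vertices
`v_0, …, v_r` (`r + 1 ≥ 1` of them) such that `C` consists of the edges
`{v_i, v_{i+1}}` (indices mod `r + 1`), using distinct edge occurrences of `G`. -/
def IsCycleEdges {V : Type} (G : Multigraph V) (C : Multiset (Sym2 V)) : Prop :=
  ∃ (r : ℕ) (v : Fin (r + 1) → V), Function.Injective v ∧
    C = Multiset.map (fun i : Fin (r + 1) => s(v i, v (i + 1))) Finset.univ.val ∧
    C ≤ G.edges

namespace Multigraph

variable {α β V : Type}

open Classical in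
noncomputable def incidence (z : α) (e : Sym2 α) : ℕ :=
  if e = Sym2.diag z then 2 else if z ∈ e then 1 else 0

theorem deg_eq_sum_incidence (G : Multigraph α) (z : α) :
    G.deg z = (G.edges.map (incidence z)).sum := rfl

theorem incidence_mk [DecidableEq α] (z a b : α) :
    incidence z s(a, b) = (if z = a then 1 else 0) + (if z = b then 1 else 0) := by
  unfold incidence
  rcases eq_or_ne z a with rfl | ha <;> rcases eq_or_ne z b with rfl | hb <;>
    simp [*, Sym2.diag, eq_comm]

theorem incidence_map {f : α → β} (hf : Function.Injective f) (z : α) (e : Sym2 α) :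
    incidence (f z) (e.map f) = incidence z e := by
  classical
  induction e using Sym2.ind with
  | _ a b => simp only [Sym2.map_mk, incidence_mk, hf.eq_iff]

theorem incidence_map_of_notMem_range {f : α → β} {z : β} (hz : z ∉ Set.range f)
    (e : Sym2 α) : incidence z (e.map f) = 0 := by
  classical
  induction e using Sym2.ind with
  | _ a b =>
    have : ∀ x, z ≠ f x := fun x h => hz ⟨x, h.symm⟩
    simp [Sym2.map_mk, incidence_mk, this]

theorem deg_add (A B : Multiset (Sym2 α)) (z : α) :
    deg ⟨A + B⟩ z = deg ⟨A⟩ z + deg ⟨B⟩ z := by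
  simp [deg_eq_sum_incidence]

theorem deg_cons_cons_swap (a b c d : α) (M : Multiset (Sym2 α)) (z : α) :
    deg ⟨s(a, d) ::ₘ s(c, b) ::ₘ M⟩ z = deg ⟨s(a, b) ::ₘ s(c, d) ::ₘ M⟩ z := by
  classical
  simp only [deg_eq_sum_incidence, Multiset.map_cons, Multiset.sum_cons, incidence_mk]
  omega

theorem deg_map {f : α → β} (hf : Function.Injective f) (M : Multiset (Sym2 α)) (z : α) :
    deg ⟨M.map (Sym2.map f)⟩ (f z) = deg ⟨M⟩ z := by
  simp [deg_eq_sum_incidence, incidence_map hf]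

theorem deg_map_of_notMem_range {f : α → β} {z : β} (hz : z ∉ Set.range f)
    (M : Multiset (Sym2 α)) : deg ⟨M.map (Sym2.map f)⟩ z = 0 := by
  simp [deg_eq_sum_incidence, incidence_map_of_notMem_range hz]

theorem Adj.symm {G : Multigraph α} {u v : α} (h : G.Adj u v) : G.Adj v u := by
  rwa [Adj, Sym2.eq_swap]

instance (G : Multigraph α) : Std.Symm G.Adj := ⟨fun _ _ => Adj.symm⟩

theorem connected_of_reachable {G : Multigraph α} (x : α)
    (h : ∀ y, Relation.ReflTransGen G.Adj x y) : G.Connected :=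
  ⟨⟨x⟩, fun u v => (symm (h u)).trans (h v)⟩

theorem Connected.exists_adj {G : Multigraph α} (hG : G.Connected) {w w' : α} (hne : w ≠ w') :
    ∃ x, G.Adj w x := by
  rcases (hG.2 w w').cases_head with h | ⟨x, hx, -⟩
  · exact absurd h hne
  · exact ⟨x, hx⟩

theorem isHomImage_iff (G : Multigraph V) (H : Multigraph α) (φ : α → V) :
    IsHomImage G H φ ↔ Function.Surjective φ ∧ G.edges = H.edges.map (Sym2.map φ) := by
  classical
  refine and_congr_right fun _ => ⟨fun h => ?_, fun h u v => by rw [h]⟩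
  refine Multiset.ext.mpr fun e => ?_
  induction e using Sym2.ind with
  | _ u v => exact h u v

def cycleEdges (r : ℕ) : Multiset (Sym2 (Fin (r + 1))) :=
  Finset.univ.val.map fun i => s(i, i + 1)

def pathEdges (r : ℕ) : Multiset (Sym2 (Fin (r + 1))) :=
  Finset.univ.val.map fun i : Fin r => s(i.castSucc, i.succ)

theorem cycleEdges_eq_cons (r : ℕ) : cycleEdges r = s(Fin.last r, 0) ::ₘ pathEdges r := by
  rw [cycleEdges, pathEdges, Fin.univ_val_map, Fin.univ_val_map, List.ofFn_succ']
  simp [Fin.coeSucc_eq_succ]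

theorem deg_cycleEdges {r : ℕ} (j : Fin (r + 1)) : deg ⟨cycleEdges r⟩ j = 2 := by
  classical
  have hpred : ∀ i : Fin (r + 1), j = i + 1 ↔ i = j - 1 := fun i => by
    rw [eq_sub_iff_add_eq, eq_comm]
  simp only [deg_eq_sum_incidence, cycleEdges, Multiset.map_map, Function.comp_def,
    incidence_mk, ← Finset.sum_eq_multiset_sum, Finset.sum_add_distrib, hpred,
    Finset.sum_ite_eq, Finset.sum_ite_eq', Finset.mem_univ, if_true]

theorem connected_pathEdges (r : ℕ) : Connected ⟨pathEdges r⟩ := by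
  refine connected_of_reachable 0 fun j => ?_
  induction j using Fin.induction with
  | zero => rfl
  | succ i ih => exact ih.tail (by simp [Adj, pathEdges])

/-- Trades the edges `ab` and `cd` of the disjoint union of `s(a, b) ::ₘ R₁` and
`s(c, d) ::ₘ R₂` for `ad` and `cb`. Degrees are unchanged, and when `R₂` is connected the edge
`ab` is in effect subdivided by a path `d, …, c`. -/
def splice (R₁ : Multiset (Sym2 α)) (R₂ : Multiset (Sym2 β)) (a b : α) (c d : β) :
    Multigraph (α ⊕ β) :=
  ⟨s(.inl a, .inr d) ::ₘ s(.inr c, .inl b) ::ₘ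
    (R₁.map (Sym2.map .inl) + R₂.map (Sym2.map .inr))⟩

section Splice

variable (R₁ : Multiset (Sym2 α)) (R₂ : Multiset (Sym2 β)) (a b : α) (c d : β)

theorem deg_splice (z : α ⊕ β) :
    (splice R₁ R₂ a b c d).deg z =
      deg ⟨(s(a, b) ::ₘ R₁).map (Sym2.map .inl) + (s(c, d) ::ₘ R₂).map (Sym2.map .inr)⟩ z := by
  rw [splice, deg_cons_cons_swap]
  simp only [Multiset.map_cons, Sym2.map_mk, Multiset.cons_add, Multiset.add_cons,
    Multiset.cons_swap (s(.inl a, .inl b) : Sym2 (α ⊕ β))]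

theorem deg_splice_inl (p : α) :
    (splice R₁ R₂ a b c d).deg (.inl p) = deg ⟨s(a, b) ::ₘ R₁⟩ p := by
  rw [deg_splice, deg_add, deg_map Sum.inl_injective,
    deg_map_of_notMem_range (by simp), add_zero]

theorem deg_splice_inr (q : β) :
    (splice R₁ R₂ a b c d).deg (.inr q) = deg ⟨s(c, d) ::ₘ R₂⟩ q := by
  rw [deg_splice, deg_add, deg_map Sum.inr_injective,
    deg_map_of_notMem_range (by simp), zero_add]

theorem map_splice {f : α → V} {g : β → V} (h : f a = g c) :
    (splice R₁ R₂ a b c d).edges.map (Sym2.map (Sum.elim f g)) =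
      (s(a, b) ::ₘ R₁).map (Sym2.map f) + (s(c, d) ::ₘ R₂).map (Sym2.map g) := by
  simp [splice, Multiset.map_map, Function.comp_def, Sym2.map_map, h, Multiset.add_cons,
    Multiset.cons_swap]

theorem connected_splice (h₁ : Connected ⟨s(a, b) ::ₘ R₁⟩) (h₂ : Connected ⟨R₂⟩) :
    (splice R₁ R₂ a b c d).Connected := by
  set S := splice R₁ R₂ a b c d
  have had : S.Adj (.inl a) (.inr d) := by simp [S, splice, Adj]
  have hcb : S.Adj (.inr c) (.inl b) := by simp [S, splice, Adj]
  have lift₂ : ∀ q q', Relation.ReflTransGen (Adj ⟨R₂⟩) q q' →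
      Relation.ReflTransGen S.Adj (.inr q) (.inr q') :=
    Relation.ReflTransGen.lift _ fun x y hxy => by
      simp only [S, splice, Adj, Multiset.mem_cons, Multiset.mem_add, Multiset.mem_map]
      exact Or.inr (Or.inr (Or.inr ⟨s(x, y), hxy, rfl⟩))
  have hab : Relation.ReflTransGen S.Adj (.inl a) (.inl b) :=
    (Relation.ReflTransGen.single had).trans ((lift₂ d c (h₂.2 d c)).tail hcb)
  have lift₁ : ∀ p, Relation.ReflTransGen S.Adj (.inl a) (.inl p) := fun p =>
    Relation.ReflTransGen.lift' _ (fun x y hxy => by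
      rcases Multiset.mem_cons.mp hxy with hxy | hxy
      · rcases Sym2.eq_iff.mp hxy with ⟨rfl, rfl⟩ | ⟨rfl, rfl⟩
        exacts [hab, symm hab]
      · refine .single ?_
        simp only [S, splice, Adj, Multiset.mem_cons, Multiset.mem_add, Multiset.mem_map]
        exact Or.inr (Or.inr (Or.inl ⟨s(x, y), hxy, rfl⟩))) _ _ (h₁.2 a p)
  refine connected_of_reachable (.inl a) ?_
  rintro (p | q)
  · exact lift₁ p
  · exact (Relation.ReflTransGen.single had).trans (lift₂ d q (h₂.2 d q))

end Splice

theorem IsKTrail.add_map_of_connected [Nontrivial V] {k : ℕ} {U : Multiset (Sym2 V)}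
    (hU : IsKTrail ⟨U⟩ k) {β : Type} [Finite β] {R : Multiset (Sym2 β)} {c d : β} (ψ : β → V)
    (hR : Connected ⟨R⟩) (hdeg : ∀ q, deg ⟨s(c, d) ::ₘ R⟩ q ≤ k) :
    IsKTrail ⟨U + (s(c, d) ::ₘ R).map (Sym2.map ψ)⟩ k := by
  classical
  obtain ⟨W, _, H, φ, hH, hdegH, hφ⟩ := hU
  obtain ⟨hsurj, rfl⟩ := (isHomImage_iff _ _ _).mp hφ
  obtain ⟨w, hw⟩ := hsurj (ψ c)
  obtain ⟨v', hv'⟩ := exists_ne (ψ c)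
  obtain ⟨w', rfl⟩ := hsurj v'
  obtain ⟨x, hx⟩ := hH.exists_adj (w := w) (w' := w') (by rintro rfl; exact hv' hw)
  have hsplit : s(w, x) ::ₘ H.edges.erase s(w, x) = H.edges := Multiset.cons_erase hx
  refine ⟨W ⊕ β, inferInstance, splice (H.edges.erase s(w, x)) R w x c d, Sum.elim φ ψ,
    connected_splice _ _ _ _ _ _ (by rwa [hsplit]) hR, ?_, ?_⟩
  · rintro (p | q)
    · rw [deg_splice_inl, hsplit]
      exact hdegH p
    · rw [deg_splice_inr]
      exact hdeg q
  · rw [isHomImage_iff, map_splice _ _ _ _ _ _ hw, hsplit]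
    refine ⟨fun z => ?_, rfl⟩
    obtain ⟨a, rfl⟩ := hsurj z
    exact ⟨.inl a, rfl⟩

end Multigraph

open Classical in
theorem kTrail_union_cycle_general {V : Type} [Finite V]
    (hV : 2 ≤ Nat.card V)
    (G : Multigraph V) (k : ℕ) (hk : 2 ≤ k)
    (U C : Multiset (Sym2 V))
    (hUtrail : IsKTrail (Multigraph.mk U) k)
    (hC : IsCycleEdges (Multigraph.mk (G.edges - U)) C) :
    IsKTrail (Multigraph.mk (U + C)) k := by
  obtain ⟨r, v, -, rfl, -⟩ := hC
  have : Nontrivial V := Finite.one_lt_card_iff_nontrivial.mp hV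
  have hcycle : Multiset.map (fun i => s(v i, v (i + 1))) Finset.univ.val =
      (s(Fin.last r, 0) ::ₘ pathEdges r).map (Sym2.map v) := by
    rw [← cycleEdges_eq_cons, cycleEdges, Multiset.map_map]
    rfl
  rw [hcycle]
  exact hUtrail.add_map_of_connected v (connected_pathEdges r) fun j => by
    rw [← cycleEdges_eq_cons, deg_cycleEdges]
    exact hk

open Classical in
/-- Augmenting a `k`-trail by a cycle: if `(V, U)` is a `k`-trail contained in `G` and `C`
is the edge multiset of a cycle of `(V, E ∖ U)`, then `(V, U ∪ C)` is also a `k`-trail. -/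
theorem kTrail_union_cycle {V : Type} [Finite V]
    (hV : 2 ≤ Nat.card V)
    (G : Multigraph V) (k : ℕ) (hk : 2 ≤ k)
    (U C : Multiset (Sym2 V)) (hU : U ≤ G.edges)
    (hUtrail : IsKTrail (Multigraph.mk U) k)
    (hC : IsCycleEdges (Multigraph.mk (G.edges - U)) C) :
    IsKTrail (Multigraph.mk (U + C)) k :=
  kTrail_union_cycle_general hV G k hk U C hUtrail hC
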